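/- Let S be a subset of R^2 and let a, b be points of R^2. Let c = (b.1, a.2) be the corner point with the first coordinate of b and the second coordinate of a, and assume the closed segment from a to c and the closed segment from c to b are both contained in S. Then d_S(a,b) = ||a - b||_1. -/

import Mathlib

/-!
Every path from `a` to `b` has length at least `‖a - b‖₁`, since the variation of a function
dominates the distance between its values at the endpoints. Conversely, `d_S` satisfies the
triangle inequality (concatenate paths) and is at most `‖p - q‖₁` whenever the segment `[p, q]`
lies in `S`; and in the `L1` norm the corner `c` lies metrically between `a` and `b`:
`‖a - c‖₁ + ‖c - b‖₁ = ‖a - b‖₁`.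
-/

open Set

noncomputable section

/-- A path in `S` from `p` to `q`: continuous on `[0,1]`, with the prescribed endpoints,
and staying in `S` on `[0,1]`. The plane carries the `L1` metric via `WithLp 1 (ℝ × ℝ)`. -/
def IsPathIn (S : Set (WithLp 1 (ℝ × ℝ))) (p q : WithLp 1 (ℝ × ℝ))
    (g : ℝ → WithLp 1 (ℝ × ℝ)) : Prop :=
  ContinuousOn g (Icc 0 1) ∧ g 0 = p ∧ g 1 = q ∧ ∀ x ∈ Icc (0:ℝ) 1, g x ∈ S

/-- The intrinsic `L1` distance in `S`: the infimum of the `L1` lengths (total variations)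
of all paths in `S` from `p` to `q` (infinity if there is no such path). -/
def dS (S : Set (WithLp 1 (ℝ × ℝ))) (p q : WithLp 1 (ℝ × ℝ)) : ENNReal :=
  ⨅ (g : ℝ → WithLp 1 (ℝ × ℝ)) (_ : IsPathIn S p q g), eVariationOn g (Icc 0 1)

def pathConcat {E : Type*} (g₁ g₂ : ℝ → E) (t : ℝ) : E :=
  if t ≤ 1 / 2 then g₁ (2 * t) else g₂ (2 * t - 1)

section pathConcat

variable {E : Type*} {g₁ g₂ : ℝ → E}

lemma pathConcat_eqOn_left : EqOn (pathConcat g₁ g₂) (g₁ ∘ (2 * ·)) (Icc 0 (1 / 2)) :=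
  fun _ ht => if_pos ht.2

lemma pathConcat_eqOn_right (h : g₁ 1 = g₂ 0) :
    EqOn (pathConcat g₁ g₂) (g₂ ∘ (2 * · + -1)) (Icc (1 / 2) 1) := by
  intro t ht
  rcases ht.1.eq_or_lt with rfl | hlt
  · norm_num [pathConcat, h]
  · simp only [pathConcat, if_neg hlt.not_ge, Function.comp_apply, sub_eq_add_neg]

lemma image_two_mul_Icc : (2 * · : ℝ → ℝ) '' Icc 0 (1 / 2) = Icc 0 1 := by
  rw [image_mul_left_Icc' two_pos]; norm_num

lemma image_two_mul_sub_one_Icc : (2 * · + -1 : ℝ → ℝ) '' Icc (1 / 2) 1 = Icc 0 1 := by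
  rw [image_affine_Icc' two_pos]; norm_num

lemma continuousOn_pathConcat [TopologicalSpace E] (h₁ : ContinuousOn g₁ (Icc 0 1))
    (h₂ : ContinuousOn g₂ (Icc 0 1)) (h : g₁ 1 = g₂ 0) :
    ContinuousOn (pathConcat g₁ g₂) (Icc 0 1) := by
  rw [← Icc_union_Icc_eq_Icc (by norm_num : (0 : ℝ) ≤ 1 / 2) (by norm_num)]
  refine ContinuousOn.union_of_isClosed ?_ ?_ isClosed_Icc isClosed_Icc
  · refine (h₁.comp (by fun_prop) ?_).congr pathConcat_eqOn_left
    exact image_two_mul_Icc ▸ mapsTo_image _ _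
  · refine (h₂.comp (by fun_prop) ?_).congr (pathConcat_eqOn_right h)
    exact image_two_mul_sub_one_Icc ▸ mapsTo_image _ _

lemma eVariationOn_pathConcat [PseudoEMetricSpace E] (h : g₁ 1 = g₂ 0) :
    eVariationOn (pathConcat g₁ g₂) (Icc 0 1) =
      eVariationOn g₁ (Icc 0 1) + eVariationOn g₂ (Icc 0 1) := by
  have hsplit := eVariationOn.Icc_add_Icc (pathConcat g₁ g₂) (by norm_num : (0 : ℝ) ≤ 1 / 2)
    (by norm_num : (1 / 2 : ℝ) ≤ 1) (mem_univ _)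
  simp only [univ_inter] at hsplit
  rw [← hsplit, eVariationOn.eq_of_eqOn pathConcat_eqOn_left,
    eVariationOn.eq_of_eqOn (pathConcat_eqOn_right h),
    eVariationOn.comp_eq_of_monotoneOn _ _ (fun _ _ _ _ hst => by linarith),
    eVariationOn.comp_eq_of_monotoneOn _ _ (fun _ _ _ _ hst => by linarith),
    image_two_mul_Icc, image_two_mul_sub_one_Icc]

end pathConcat

lemma eVariationOn_lineMap_le {P V : Type*} [SeminormedAddCommGroup V] [NormedSpace ℝ V]
    [PseudoMetricSpace P] [NormedAddTorsor V P] (p q : P) :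
    eVariationOn (AffineMap.lineMap p q : ℝ → P) (Icc 0 1) ≤ edist p q := by
  calc eVariationOn (AffineMap.lineMap p q ∘ id : ℝ → P) (Icc 0 1)
      ≤ nndist p q * eVariationOn id (Icc (0 : ℝ) 1) :=
        (lipschitzWith_lineMap p q).lipschitzOnWith.comp_eVariationOn_le (mapsTo_univ _ _)
    _ = edist p q := by simp [eVariationOn_id_Icc]

section IntrinsicDistance

variable {S : Set (WithLp 1 (ℝ × ℝ))} {p q r : WithLp 1 (ℝ × ℝ)}

lemma IsPathIn.pathConcat {g₁ g₂ : ℝ → WithLp 1 (ℝ × ℝ)} (h₁ : IsPathIn S p q g₁)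
    (h₂ : IsPathIn S q r g₂) : IsPathIn S p r (pathConcat g₁ g₂) := by
  obtain ⟨hc₁, h₁0, h₁1, hS₁⟩ := h₁
  obtain ⟨hc₂, h₂0, h₂1, hS₂⟩ := h₂
  have hmid : g₁ 1 = g₂ 0 := h₁1.trans h₂0.symm
  refine ⟨continuousOn_pathConcat hc₁ hc₂ hmid, by simp [_root_.pathConcat, h₁0],
    by norm_num [_root_.pathConcat, h₂1], fun t ht => ?_⟩
  by_cases hle : t ≤ 1 / 2
  · rw [pathConcat_eqOn_left ⟨ht.1, hle⟩]
    exact hS₁ _ (image_two_mul_Icc ▸ mem_image_of_mem _ ⟨ht.1, hle⟩)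
  · have ht' : t ∈ Icc (1 / 2) 1 := ⟨(not_le.1 hle).le, ht.2⟩
    rw [pathConcat_eqOn_right hmid ht']
    exact hS₂ _ (image_two_mul_sub_one_Icc ▸ mem_image_of_mem _ ht')

lemma dS_triangle : dS S p r ≤ dS S p q + dS S q r :=
  ENNReal.le_iInf₂_add_iInf₂ fun _ h₁ _ h₂ =>
    (iInf₂_le _ (h₁.pathConcat h₂)).trans_eq
      (eVariationOn_pathConcat (h₁.2.2.1.trans h₂.2.1.symm))

lemma dS_le_edist_of_segment_subset (h : segment ℝ p q ⊆ S) : dS S p q ≤ edist p q := by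
  have hpath : IsPathIn S p q (AffineMap.lineMap p q) :=
    ⟨by fun_prop, by simp, by simp,
      fun t ht => h (segment_eq_image_lineMap ℝ p q ▸ mem_image_of_mem _ ht)⟩
  exact (iInf₂_le _ hpath).trans (eVariationOn_lineMap_le p q)

lemma edist_le_dS : edist p q ≤ dS S p q :=
  le_iInf₂ fun g ⟨_, hg0, hg1, _⟩ => by
    simpa [hg0, hg1] using
      eVariationOn.edist_le g (x := 0) (y := 1) (s := Icc 0 1) (by simp) (by simp)

end IntrinsicDistance

lemma edist_add_edist_corner (a b : WithLp 1 (ℝ × ℝ)) :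
    edist a ((WithLp.equiv 1 (ℝ × ℝ)).symm (b.ofLp.1, a.ofLp.2)) +
      edist ((WithLp.equiv 1 (ℝ × ℝ)).symm (b.ofLp.1, a.ofLp.2)) b = edist a b := by
  simp [WithLp.prod_edist_eq_of_L1]

theorem L_shaped_path_shortest (S : Set (WithLp 1 (ℝ × ℝ))) (a b : WithLp 1 (ℝ × ℝ))
    (hseg1 : segment ℝ a ((WithLp.equiv 1 (ℝ × ℝ)).symm (b.ofLp.1, a.ofLp.2)) ⊆ S)
    (hseg2 : segment ℝ ((WithLp.equiv 1 (ℝ × ℝ)).symm (b.ofLp.1, a.ofLp.2)) b ⊆ S) :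
    dS S a b = (‖a - b‖₊ : ENNReal) := by
  rw [← enorm_eq_nnnorm, ← edist_eq_enorm_sub]
  refine le_antisymm ?_ edist_le_dS
  calc dS S a b ≤ dS S a _ + dS S _ b := dS_triangle
    _ ≤ edist a _ + edist _ b :=
      add_le_add (dS_le_edist_of_segment_subset hseg1) (dS_le_edist_of_segment_subset hseg2)
    _ = edist a b := edist_add_edist_corner a b
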